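/- arXiv:1812.11659 — 6 statements merged into one kernel-verified Lean document; each statement's English description precedes it below -/
import Mathlib

section
/- For all integers n ≥ 1 and k, the rational functions f(n,k) = (-1)^k (4n-1) ((-1/2)_n)^3 (-1/2)_{n+k} / ((1)_n^3 (1)_{n-k} ((-1/2)_k)^2) and g(n,k) = (-1)^{k-1} · 4 ((-1/2)_n)^3 (-1/2)_{n+k-1} / ((1)_{n-1}^3 (1)_{n-k} ((-1/2)_k)^2) satisfy the WZ-type relation (2k-3)·f(n,k-1) - (2k-4)·f(n,k) = g(n+1,k) - g(n,k), where (a)_m = a(a+1)···(a+m-1) is the Pochhammer symbol and 1/(1)_m is taken to be 0 for negative integers m. -/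
/-- Pochhammer symbol `(a)_m = a(a+1)⋯(a+m-1)` for `m ≥ 0`, extended to negative `m`
by `(a)_m = 1/((a-1)(a-2)⋯(a+m))`; with Lean's `0⁻¹ = 0` convention this makes
`1/(1)_m = 0` for negative `m`. -/
noncomputable def poch (a : ℚ) (m : ℤ) : ℚ :=
  if 0 ≤ m then ∏ j ∈ Finset.range m.toNat, (a + j)
  else (∏ j ∈ Finset.range (-m).toNat, (a - 1 - j))⁻¹

lemma half_sub_ne (m : ℤ) : ((m:ℚ) - 1/2) ≠ 0 := by
  intro h
  have h2 : ((2*m - 1 : ℤ) : ℚ) = 0 := by push_cast; linarith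
  have : (2*m - 1 : ℤ) = 0 := by exact_mod_cast h2
  omega

lemma poch_succ_nonneg (a : ℚ) (m : ℤ) (hm : 0 ≤ m) :
    poch a (m + 1) = poch a m * (a + m) := by
  have h1 : (0:ℤ) ≤ m + 1 := by omega
  have ht : (m + 1).toNat = m.toNat + 1 := by omega
  simp only [poch, if_pos hm, if_pos h1, ht, Finset.prod_range_succ]
  have : (m.toNat : ℚ) = (m:ℚ) := by exact_mod_cast Int.toNat_of_nonneg hm
  rw [this]

lemma poch_half_succ (m : ℤ) :
    poch (-1/2) (m + 1) = poch (-1/2) m * (-1/2 + m) := by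
  rcases le_or_gt 0 m with hm | hm
  · exact poch_succ_nonneg _ _ hm
  · rcases eq_or_lt_of_le (by omega : m ≤ -1) with h | h
    · subst h
      norm_num [poch]
    · have h0 : ¬ (0:ℤ) ≤ m + 1 := by omega
      have h0' : ¬ (0:ℤ) ≤ m := by omega
      have ht : (-m).toNat = (-(m+1)).toNat + 1 := by omega
      simp only [poch, if_neg h0, if_neg h0', ht, Finset.prod_range_succ]
      have hcz : ((-(m+1)).toNat : ℤ) = -(m+1) := Int.toNat_of_nonneg (by omega)
      have hc : ((-(m+1)).toNat : ℚ) = -((m:ℚ)+1) := by exact_mod_cast hcz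
      rw [mul_inv, hc]
      have h1 : (-1/2 - 1 - (-((m:ℚ)+1))) = (m:ℚ) - 1/2 := by ring
      have h2 : (-1/2 + (m:ℚ)) = (m:ℚ) - 1/2 := by ring
      rw [h1, h2, inv_mul_cancel_right₀ (half_sub_ne m)]

lemma poch_one_neg (m : ℤ) (hm : m < 0) : poch 1 m = 0 := by
  have h0 : ¬ (0:ℤ) ≤ m := by omega
  simp only [poch, if_neg h0]
  rw [Finset.prod_eq_zero (i := 0) (by simp; omega)]
  · simp
  · norm_num

lemma poch_half_ne (m : ℤ) : poch (-1/2) m ≠ 0 := by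
  rcases le_or_gt 0 m with hm | hm
  · simp only [poch, if_pos hm]
    apply Finset.prod_ne_zero_iff.2
    intro j _
    intro h
    have h2 : ((2*(j:ℤ) - 1 : ℤ) : ℚ) = 0 := by push_cast; linarith
    have : (2*(j:ℤ) - 1 : ℤ) = 0 := by exact_mod_cast h2
    omega
  · have h0 : ¬ (0:ℤ) ≤ m := by omega
    simp only [poch, if_neg h0]
    apply inv_ne_zero
    apply Finset.prod_ne_zero_iff.2
    intro j _
    intro h
    have h2 : ((2*(j:ℤ) + 3 : ℤ) : ℚ) = 0 := by push_cast; linarith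
    have : (2*(j:ℤ) + 3 : ℤ) = 0 := by exact_mod_cast h2
    omega

lemma poch_one_ne (m : ℤ) (hm : 0 ≤ m) : poch 1 m ≠ 0 := by
  simp only [poch, if_pos hm]
  apply Finset.prod_ne_zero_iff.2
  intro j _
  positivity

noncomputable def fWZ (n k : ℤ) : ℚ :=
  (-1 : ℚ) ^ k * (4 * n - 1) * poch (-1/2) n ^ 3 * poch (-1/2) (n + k) /
    (poch 1 n ^ 3 * poch 1 (n - k) * poch (-1/2) k ^ 2)

noncomputable def gWZ (n k : ℤ) : ℚ :=
  (-1 : ℚ) ^ (k - 1) * 4 * poch (-1/2) n ^ 3 * poch (-1/2) (n + k - 1) /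
    (poch 1 (n - 1) ^ 3 * poch 1 (n - k) * poch (-1/2) k ^ 2)

lemma poch_zero (a : ℚ) : poch a 0 = 1 := by simp [poch]

set_option maxHeartbeats 4000000 in
theorem wz_pair_relation (n : ℤ) (hn : 1 ≤ n) (k : ℤ) :
    (2 * k - 3 : ℚ) * fWZ n (k - 1) - (2 * k - 4 : ℚ) * fWZ n k
      = gWZ (n + 1) k - gWZ n k := by
  have hA : poch (-1/2) n ≠ 0 := poch_half_ne n
  have hB' : poch (-1/2) (n+k-1) ≠ 0 := poch_half_ne _
  have hE' : poch (-1/2) (k-1) ≠ 0 := poch_half_ne _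
  have hC : poch 1 n ≠ 0 := poch_one_ne _ (by omega)
  have hC' : poch 1 (n-1) ≠ 0 := poch_one_ne _ (by omega)
  have hkE : poch (-1/2) k = poch (-1/2) (k-1) * (-1/2 + ((k-1 : ℤ) : ℚ)) := by
    have := poch_half_succ (k-1); rwa [sub_add_cancel] at this
  have hB : poch (-1/2) (n+k) = poch (-1/2) (n+k-1) * (-1/2 + ((n+k-1 : ℤ) : ℚ)) := by
    have := poch_half_succ (n+k-1); rwa [sub_add_cancel] at this
  have hCeq : poch 1 n = poch 1 (n-1) * (1 + ((n-1 : ℤ) : ℚ)) := by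
    have := poch_succ_nonneg 1 (n-1) (by omega); rwa [sub_add_cancel] at this
  have hCn : poch 1 (n+1) = poch 1 n * (1 + (n : ℚ)) := poch_succ_nonneg 1 n (by omega)
  have hAn : poch (-1/2) (n+1) = poch (-1/2) n * (-1/2 + (n : ℚ)) := poch_half_succ n
  have hs : (-1:ℚ)^k = (-1)^(k-1) * (-1) := by
    rw [← zpow_add_one₀ (by norm_num : (-1:ℚ) ≠ 0) (k-1), sub_add_cancel]
  have hk32 : (-1/2 + ((k-1 : ℤ) : ℚ)) ≠ 0 := by
    have h := half_sub_ne (k-1)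
    intro hc; apply h; push_cast at hc ⊢; linarith
  rcases lt_trichotomy k (n+1) with hkn | hkn | hkn
  · -- k ≤ n
    have hD : poch 1 (n-k) ≠ 0 := poch_one_ne _ (by omega)
    have hD1 : poch 1 (n-(k-1)) = poch 1 (n-k) * (1 + ((n-k : ℤ) : ℚ)) := by
      rw [show n-(k-1) = (n-k)+1 by ring]; exact poch_succ_nonneg 1 _ (by omega)
    have hnk1 : (1 + ((n-k : ℤ) : ℚ)) ≠ 0 := by
      intro hc
      have : ((n-k+1 : ℤ) : ℚ) = 0 := by push_cast; push_cast at hc; linarith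
      have : (n-k+1 : ℤ) = 0 := by exact_mod_cast this
      omega
    simp only [fWZ, gWZ,
      show n + (k-1) = n+k-1 by ring, show n + 1 - 1 = n by ring,
      show n + 1 - k = n - (k-1) by ring, show n + 1 + k - 1 = n + k by ring,
      hD1, hkE, hB, hCeq, hCn, hAn, hs]
    have hn0 : ((n:ℚ)) ≠ 0 := Int.cast_ne_zero.mpr (by omega)
    have hn1 : (1 + (n:ℚ)) ≠ 0 := by
      have h : ((n+1:ℤ):ℚ) ≠ 0 := Int.cast_ne_zero.mpr (by omega)
      intro hc; apply h; push_cast; linarith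
    push_cast at hk32 hnk1 ⊢
    set A := poch (-1/2) n
    set B := poch (-1/2) (n+k-1)
    set E := poch (-1/2) (k-1)
    set C := poch 1 (n-1)
    set D := poch 1 (n-k)
    set s := (-1:ℚ)^(k-1)
    set x := (n:ℚ)
    set y := (k:ℚ)
    simp only [← mul_div_assoc]
    have hx : (1+((n:ℚ)-1)) ≠ 0 := by intro h; apply hn0; linarith
    have hq1 : (C * (1 + (x - 1))) ^ 3 * (D * (1 + (x - y))) * E ^ 2 ≠ 0 := by
      apply_rules [mul_ne_zero, pow_ne_zero]
    have hq2 : (C * (1 + (x - 1))) ^ 3 * D * (E * (-1/2 + (y - 1))) ^ 2 ≠ 0 := by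
      apply_rules [mul_ne_zero, pow_ne_zero]
    have hq3 : (C * (1 + (x - 1))) ^ 3 * (D * (1 + (x - y))) * (E * (-1/2 + (y - 1))) ^ 2 ≠ 0 := by
      apply_rules [mul_ne_zero, pow_ne_zero]
    have hq4 : C ^ 3 * D * (E * (-1/2 + (y - 1))) ^ 2 ≠ 0 := by
      apply_rules [mul_ne_zero, pow_ne_zero]
    rw [div_sub_div _ _ hq1 hq2, div_sub_div _ _ hq3 hq4,
      div_eq_div_iff (mul_ne_zero hq1 hq2) (mul_ne_zero hq3 hq4)]
    ring
  · -- k = n+1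
    subst hkn
    have hz1 : fWZ n (n+1) = 0 := by
      simp [fWZ, poch_one_neg (-1 : ℤ) (by omega)]
    have hz2 : gWZ n (n+1) = 0 := by
      simp [gWZ, poch_one_neg (-1 : ℤ) (by omega)]
    rw [hz1, hz2, mul_zero, sub_zero, sub_zero]
    have hx2 : (-1/2 + (n:ℚ)) ≠ 0 := by
      have := half_sub_ne n; intro hc; apply this; linarith
    simp only [fWZ, gWZ,
      show (n:ℤ)+1-1 = n by ring, show n - n = (0:ℤ) by ring,
      show n+1-(n+1) = (0:ℤ) by ring, show n+1+(n+1)-1 = (n+n)+1 by ring,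
      poch_zero, poch_half_succ, hAn]
    push_cast
    simp only [← mul_div_assoc]
    have hq1 : poch 1 n ^ 3 * 1 * poch (-1/2) n ^ 2 ≠ 0 := by
      apply_rules [mul_ne_zero, pow_ne_zero]; norm_num
    have hq2 : poch 1 n ^ 3 * 1 * (poch (-1/2) n * (-1/2 + (n:ℚ))) ^ 2 ≠ 0 := by
      apply_rules [mul_ne_zero, pow_ne_zero]; norm_num
    rw [div_eq_div_iff hq1 hq2]
    ring
  · -- k ≥ n+2
    have h1 : poch 1 (n-k) = 0 := poch_one_neg _ (by omega)
    have h2 : poch 1 (n-(k-1)) = 0 := poch_one_neg _ (by omega)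
    have h3 : poch 1 (n+1-k) = 0 := poch_one_neg _ (by omega)
    simp [fWZ, gWZ, h1, h2, h3]
end

section
/- In the field of rational functions in q, define F(n,k) = (-1)^k q^{(k-2)(k-2n+1)} [4n-1] (q^{-1};q^2)_n^3 (q^{-1};q^2)_{n+k} / ((q^2;q^2)_n^3 (q^2;q^2)_{n-k} (q^{-1};q^2)_k^2) and G(n,k) = (-1)^{k-1} q^{(k-2)(k-2n+3)} (q^{-1};q^2)_n^3 (q^{-1};q^2)_{n+k-1} / ((1-q)^2 (q^2;q^2)_{n-1}^3 (q^2;q^2)_{n-k} (q^{-1};q^2)_k^2), with the convention 1/(q^2;q^2)_m = 0 for negative integers m. Then [2k-3]F(n,k-1) - [2k-4]F(n,k) = G(n+1,k) - G(n,k) for all integers n ≥ 0 and all integers k. -/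
/-! For `k ≤ n` the one-step recurrences of the q-shifted factorials write each of the four
terms as the common factor `wzFactor n k` times a rational function of `q`, `q ^ n`, `q ^ k`,
and the relation becomes an identity of rational functions. For `k > n` the convention
`1 / (q²; q²)_{n-k} = 0` kills `F(n, k)` and `G(n, k)`: at `k = n + 1` what remains is
`[2n-1] F(n, n) = G(n + 1, n + 1)`, and for `k ≥ n + 2` every term vanishes. -/

open RatFunc

noncomputable def q : RatFunc ℚ := RatFunc.X

/-- q-shifted factorial `(a;b)_m = (1-a)(1-ab)⋯(1-ab^{m-1})` for `m ≥ 0`, extended to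
negative `m` by `(a;b)_m = 1/((1-a/b)(1-a/b²)⋯(1-a b^m))`; with Lean's `0⁻¹ = 0`
this realizes the convention `1/(q²;q²)_m = 0` for negative `m`. -/
noncomputable def qpochZ (a b : RatFunc ℚ) (m : ℤ) : RatFunc ℚ :=
  if 0 ≤ m then ∏ j ∈ Finset.range m.toNat, (1 - a * b ^ j)
  else (∏ j ∈ Finset.range (-m).toNat, (1 - a * b ^ (-(j : ℤ) - 1)))⁻¹

/-- q-integer `[m] = (1-q^m)/(1-q)`, for arbitrary integer `m`. -/
noncomputable def qintZ (m : ℤ) : RatFunc ℚ := (1 - q ^ m) / (1 - q)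

noncomputable def Fqwz (n : ℕ) (k : ℤ) : RatFunc ℚ :=
  (-1 : RatFunc ℚ) ^ k * q ^ ((k - 2) * (k - 2 * (n : ℤ) + 1)) * qintZ (4 * n - 1) *
      qpochZ q⁻¹ (q ^ 2) n ^ 3 * qpochZ q⁻¹ (q ^ 2) ((n : ℤ) + k) /
    (qpochZ (q ^ 2) (q ^ 2) n ^ 3 * qpochZ (q ^ 2) (q ^ 2) ((n : ℤ) - k) *
      qpochZ q⁻¹ (q ^ 2) k ^ 2)

noncomputable def Gqwz (n : ℕ) (k : ℤ) : RatFunc ℚ :=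
  (-1 : RatFunc ℚ) ^ (k - 1) * q ^ ((k - 2) * (k - 2 * (n : ℤ) + 3)) *
      qpochZ q⁻¹ (q ^ 2) n ^ 3 * qpochZ q⁻¹ (q ^ 2) ((n : ℤ) + k - 1) /
    ((1 - q) ^ 2 * qpochZ (q ^ 2) (q ^ 2) ((n : ℤ) - 1) ^ 3 *
      qpochZ (q ^ 2) (q ^ 2) ((n : ℤ) - k) * qpochZ q⁻¹ (q ^ 2) k ^ 2)

lemma q_ne_zero : q ≠ 0 := RatFunc.X_ne_zero

lemma q_zpow_ne_one {m : ℤ} (hm : m ≠ 0) : q ^ m ≠ 1 := by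
  have hpow : ∀ l : ℕ, 0 < l → q ^ l ≠ 1 := fun l hl h => by
    rw [q, ← RatFunc.algebraMap_X, ← map_pow,
      ← map_one (algebraMap (Polynomial ℚ) (RatFunc ℚ))] at h
    simpa [hl.ne'] using congrArg Polynomial.natDegree (RatFunc.algebraMap_injective ℚ h)
  obtain ⟨l, rfl | rfl⟩ := m.eq_nat_or_neg
  · simpa using hpow l (by omega)
  · simpa using hpow l (by omega)

lemma one_sub_q_zpow_ne_zero {m : ℤ} (hm : m ≠ 0) : 1 - q ^ m ≠ 0 :=
  sub_ne_zero.mpr (q_zpow_ne_one hm).symm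

lemma qpochZ_zero (a b : RatFunc ℚ) : qpochZ a b 0 = 1 := by
  simp [qpochZ]

lemma qpochZ_add_one (a b : RatFunc ℚ) (m : ℤ) (h : 1 - a * b ^ m ≠ 0) :
    qpochZ a b (m + 1) = qpochZ a b m * (1 - a * b ^ m) := by
  unfold qpochZ
  obtain hm | rfl | hm := lt_trichotomy m (-1)
  · rw [if_neg (by omega), if_neg (by omega), show (-m).toNat = (-(m + 1)).toNat + 1 by omega,
      Finset.prod_range_succ, show -((-(m + 1)).toNat : ℤ) - 1 = m by omega, mul_inv,
      inv_mul_cancel_right₀ h]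
  · norm_num at h ⊢
    exact (inv_mul_cancel₀ h).symm
  · rw [if_pos (by omega), if_pos (by omega), show (m + 1).toNat = m.toNat + 1 by omega,
      Finset.prod_range_succ, ← zpow_natCast, Int.toNat_of_nonneg (by omega)]

lemma qpochZ_self_of_neg {b : RatFunc ℚ} (hb : b ≠ 0) {m : ℤ} (hm : m < 0) :
    qpochZ b b m = 0 := by
  rw [qpochZ, if_neg (by omega), Finset.prod_eq_zero (i := 0) (by simp; omega) (by simp [hb]),
    inv_zero]

lemma qpochZ_qinv_add_one (m : ℤ) :
    qpochZ q⁻¹ (q ^ 2) (m + 1) = qpochZ q⁻¹ (q ^ 2) m * (1 - q ^ (2 * m - 1)) := by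
  have hexp : q⁻¹ * (q ^ 2) ^ m = q ^ (2 * m - 1) := by
    rw [← zpow_natCast, ← zpow_mul, ← zpow_neg_one, ← zpow_add₀ q_ne_zero]
    ring_nf
  rw [qpochZ_add_one _ _ m (hexp ▸ one_sub_q_zpow_ne_zero (by omega)), hexp]

lemma qpochZ_qinv_eq_sub_one_mul (m : ℤ) :
    qpochZ q⁻¹ (q ^ 2) m = qpochZ q⁻¹ (q ^ 2) (m - 1) * (1 - q ^ (2 * m - 3)) := by
  simpa [show 2 * (m - 1) - 1 = 2 * m - 3 by ring] using qpochZ_qinv_add_one (m - 1)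

lemma qpochZ_qsq_add_one {m : ℤ} (hm : m ≠ -1) :
    qpochZ (q ^ 2) (q ^ 2) (m + 1) = qpochZ (q ^ 2) (q ^ 2) m * (1 - q ^ (2 * m + 2)) := by
  have hexp : q ^ 2 * (q ^ 2) ^ m = q ^ (2 * m + 2) := by
    rw [← zpow_natCast, ← zpow_mul, ← zpow_add₀ q_ne_zero]
    ring_nf
  rw [qpochZ_add_one _ _ m (hexp ▸ one_sub_q_zpow_ne_zero (by omega)), hexp]

lemma qpochZ_qsq_natCast_sub_one (n : ℕ) :
    qpochZ (q ^ 2) (q ^ 2) (n - 1) = qpochZ (q ^ 2) (q ^ 2) n / (1 - q ^ (2 * (n : ℤ))) := by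
  cases n with
  | zero => simp [qpochZ_self_of_neg (pow_ne_zero 2 q_ne_zero)]
  | succ m =>
    rw [eq_div_iff (one_sub_q_zpow_ne_zero (by omega)), Nat.cast_succ, add_sub_cancel_right,
      qpochZ_qsq_add_one (by omega)]
    ring_nf

/-- For `k = n + 1` the factor `(q²; q²)_{n-k}` in the denominator is `0`, so this is `0` by
Lean's `x / 0 = 0` and the factorizations below need `k ≤ n`. -/
noncomputable def wzFactor (n : ℕ) (k : ℤ) : RatFunc ℚ :=
  (-1 : RatFunc ℚ) ^ (k - 1) * q ^ ((k - 3) * (k - 2 * (n : ℤ))) *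
      qpochZ q⁻¹ (q ^ 2) n ^ 3 * qpochZ q⁻¹ (q ^ 2) ((n : ℤ) + k - 1) /
    ((1 - q) ^ 2 * qpochZ (q ^ 2) (q ^ 2) n ^ 3 * qpochZ (q ^ 2) (q ^ 2) ((n : ℤ) - k) *
      qpochZ q⁻¹ (q ^ 2) (k - 1) ^ 2)

section Factorization

variable (n : ℕ) (k : ℤ)

lemma qintZ_mul_Fqwz_sub_one_eq_wzFactor_mul (hk : k ≤ n) :
    qintZ (2 * k - 3) * Fqwz n (k - 1) = wzFactor n k *
      ((1 - q ^ (2 * k - 3)) * (1 - q ^ (4 * (n : ℤ) - 1)) /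
        (1 - q ^ (2 * (n : ℤ) - 2 * k + 2))) := by
  rw [Fqwz, wzFactor, qintZ, qintZ, show (n : ℤ) - (k - 1) = n - k + 1 by ring,
    qpochZ_qsq_add_one (by omega),
    show (k - 1 - 2) * (k - 1 - 2 * (n : ℤ) + 1) = (k - 3) * (k - 2 * n) by ring,
    show (n : ℤ) + (k - 1) = n + k - 1 by ring,
    show 2 * ((n : ℤ) - k) + 2 = 2 * n - 2 * k + 2 by ring]
  simp only [div_eq_mul_inv, mul_inv, ← inv_pow]
  ring

lemma qintZ_mul_Fqwz_eq_neg_wzFactor_mul :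
    qintZ (2 * k - 4) * Fqwz n k = -(wzFactor n k *
      ((1 - q ^ (2 * k - 4)) * q ^ (2 * k - 2 * (n : ℤ) - 2) * (1 - q ^ (4 * (n : ℤ) - 1)) *
        (1 - q ^ (2 * (n : ℤ) + 2 * k - 3)) / (1 - q ^ (2 * k - 3)) ^ 2)) := by
  rw [Fqwz, wzFactor, qintZ, qintZ, qpochZ_qinv_eq_sub_one_mul k,
    qpochZ_qinv_eq_sub_one_mul (n + k),
    show (k - 2) * (k - 2 * (n : ℤ) + 1) = (k - 3) * (k - 2 * n) + (2 * k - 2 * n - 2) by ring,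
    zpow_add₀ q_ne_zero, show 2 * ((n : ℤ) + k) - 3 = 2 * n + 2 * k - 3 by ring,
    zpow_sub_one₀ (by norm_num : (-1 : RatFunc ℚ) ≠ 0)]
  simp only [div_eq_mul_inv, mul_inv, mul_pow, ← inv_pow]
  ring

lemma Gqwz_add_one_eq_wzFactor_mul (hk : k ≤ n) :
    Gqwz (n + 1) k = wzFactor n k *
      (q ^ (2 * k - 2 * (n : ℤ) - 2) * (1 - q ^ (2 * (n : ℤ) - 1)) ^ 3 *
        (1 - q ^ (2 * (n : ℤ) + 2 * k - 3)) /
        ((1 - q ^ (2 * (n : ℤ) - 2 * k + 2)) * (1 - q ^ (2 * k - 3)) ^ 2)) := by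
  rw [Gqwz, wzFactor, Nat.cast_succ, qpochZ_qinv_add_one, qpochZ_qinv_eq_sub_one_mul k,
    show (n : ℤ) + 1 + k - 1 = n + k - 1 + 1 by ring, qpochZ_qinv_add_one,
    show (n : ℤ) + 1 - k = n - k + 1 by ring, qpochZ_qsq_add_one (by omega), add_sub_cancel_right,
    show (k - 2) * (k - 2 * ((n : ℤ) + 1) + 3) = (k - 3) * (k - 2 * n) + (2 * k - 2 * n - 2) by
      ring,
    zpow_add₀ q_ne_zero, show 2 * ((n : ℤ) + k - 1) - 1 = 2 * n + 2 * k - 3 by ring,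
    show 2 * ((n : ℤ) - k) + 2 = 2 * n - 2 * k + 2 by ring]
  simp only [div_eq_mul_inv, mul_inv, mul_pow, ← inv_pow]
  ring

lemma Gqwz_eq_wzFactor_mul :
    Gqwz n k = wzFactor n k *
      (q ^ (4 * k - 2 * (n : ℤ) - 6) * (1 - q ^ (2 * (n : ℤ))) ^ 3 /
        (1 - q ^ (2 * k - 3)) ^ 2) := by
  rw [Gqwz, wzFactor, qpochZ_qsq_natCast_sub_one, qpochZ_qinv_eq_sub_one_mul k,
    show (k - 2) * (k - 2 * (n : ℤ) + 3) = (k - 3) * (k - 2 * n) + (4 * k - 2 * n - 6) by ring,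
    zpow_add₀ q_ne_zero]
  simp only [div_eq_mul_inv, mul_inv, mul_pow, ← inv_pow, inv_inv]
  ring

end Factorization

lemma Fqwz_eq_zero_of_lt {n : ℕ} {k : ℤ} (hk : (n : ℤ) < k) : Fqwz n k = 0 := by
  rw [Fqwz, qpochZ_self_of_neg (pow_ne_zero 2 q_ne_zero) (by omega : (n : ℤ) - k < 0)]
  simp

lemma Gqwz_eq_zero_of_lt {n : ℕ} {k : ℤ} (hk : (n : ℤ) < k) : Gqwz n k = 0 := by
  rw [Gqwz, qpochZ_self_of_neg (pow_ne_zero 2 q_ne_zero) (by omega : (n : ℤ) - k < 0)]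
  simp

lemma qintZ_mul_Fqwz_self (n : ℕ) : qintZ (2 * n - 1) * Fqwz n n = Gqwz (n + 1) (n + 1) := by
  rw [Fqwz, Gqwz, qintZ, qintZ, Nat.cast_succ, add_sub_cancel_right, sub_self, sub_self,
    qpochZ_zero, qpochZ_qinv_add_one, show (n : ℤ) + 1 + (n + 1) - 1 = n + n + 1 by ring,
    qpochZ_qinv_add_one, show 2 * ((n : ℤ) + n) - 1 = 4 * n - 1 by ring,
    show ((n : ℤ) - 2) * (n - 2 * n + 1) = ((n : ℤ) + 1 - 2) * (n + 1 - 2 * (n + 1) + 3) by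
      ring]
  field_simp

/-- `q_wz_pair_relation` for `k ≤ n`, divided by `wzFactor n k`, with `q` generalized to `x`. -/
lemma wz_ratio_identity {K : Type*} [Field K] {x : K} (hx : x ≠ 0) (n k : ℤ)
    (hu : 1 - x ^ (2 * n - 2 * k + 2) ≠ 0) (hv : 1 - x ^ (2 * k - 3) ≠ 0) :
    (1 - x ^ (2 * k - 3)) * (1 - x ^ (4 * n - 1)) / (1 - x ^ (2 * n - 2 * k + 2))
      + (1 - x ^ (2 * k - 4)) * x ^ (2 * k - 2 * n - 2) * (1 - x ^ (4 * n - 1)) *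
          (1 - x ^ (2 * n + 2 * k - 3)) / (1 - x ^ (2 * k - 3)) ^ 2
      = x ^ (2 * k - 2 * n - 2) * (1 - x ^ (2 * n - 1)) ^ 3 * (1 - x ^ (2 * n + 2 * k - 3)) /
          ((1 - x ^ (2 * n - 2 * k + 2)) * (1 - x ^ (2 * k - 3)) ^ 2)
        - x ^ (4 * k - 2 * n - 6) * (1 - x ^ (2 * n)) ^ 3 / (1 - x ^ (2 * k - 3)) ^ 2 := by
  have hv2 := pow_ne_zero 2 hv
  rw [div_add_div _ _ hu hv2, div_sub_div _ _ (mul_ne_zero hu hv2) hv2,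
    div_eq_div_iff (mul_ne_zero hu hv2) (mul_ne_zero (mul_ne_zero hu hv2) hv2)]
  have hA : x ^ n ≠ 0 := zpow_ne_zero n hx
  have hB : x ^ k ≠ 0 := zpow_ne_zero k hx
  simp only [zpow_add₀ hx, zpow_sub₀ hx, zpow_mul', zpow_ofNat]
  field_simp
  ring

lemma wz_relation_of_le {n : ℕ} {k : ℤ} (hk : k ≤ n) :
    qintZ (2 * k - 3) * Fqwz n (k - 1) - qintZ (2 * k - 4) * Fqwz n k
      = Gqwz (n + 1) k - Gqwz n k := by
  rw [qintZ_mul_Fqwz_sub_one_eq_wzFactor_mul n k hk, qintZ_mul_Fqwz_eq_neg_wzFactor_mul,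
    Gqwz_add_one_eq_wzFactor_mul n k hk, Gqwz_eq_wzFactor_mul, sub_neg_eq_add,
    ← mul_add (wzFactor n k), ← mul_sub (wzFactor n k),
    wz_ratio_identity q_ne_zero n k (one_sub_q_zpow_ne_zero (by omega))
      (one_sub_q_zpow_ne_zero (by omega))]

theorem q_wz_pair_relation (n : ℕ) (k : ℤ) :
    qintZ (2 * k - 3) * Fqwz n (k - 1) - qintZ (2 * k - 4) * Fqwz n k
      = Gqwz (n + 1) k - Gqwz n k := by
  obtain hk | rfl | hk := lt_trichotomy k (n + 1)
  · exact wz_relation_of_le (by omega)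
  · rw [Fqwz_eq_zero_of_lt (k := n + 1) (by omega), Gqwz_eq_zero_of_lt (n := n) (by omega),
      mul_zero, sub_zero, sub_zero, add_sub_cancel_right,
      show 2 * ((n : ℤ) + 1) - 3 = 2 * n - 1 by ring]
    exact qintZ_mul_Fqwz_self n
  · rw [Fqwz_eq_zero_of_lt (by omega), Fqwz_eq_zero_of_lt (by omega),
      Gqwz_eq_zero_of_lt (by push_cast; omega), Gqwz_eq_zero_of_lt (by omega)]
    simp
end

section
/- Let p be an odd prime and r ≥ 1. Then sum_{k=0}^{(p^r-1)/2} (4k+3)/(16(k+1)^4 · 256^k) · binom(2k,k)^4 ≡ 1 - 5p^{4r} (mod p^{4r+1}), as a congruence of p-adic integers (each summand is a p-adic integer since binom(2k,k)^4/((k+1)^4 256^k) ∈ ℤ_p for k in the range). -/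
/-!
The summand is `F k - F (k + 1)` for `F n = (8n² + 4n + 1) C(2n, n)⁴ / 256ⁿ`, and `F 0 = 1`, so with
`p ^ r = 2m + 1` the sum is `1 - F (m + 1)`. From `(m + 1) C(2m + 2, m + 1) = 2 p ^ r C(2m, m)` we get
`F (m + 1) = p ^ (4r) u` with `u = 16 (8n² + 4n + 1) C(2m, m)⁴ / (n⁴ 256ⁿ)`, `n = m + 1`. Modulo `p`,
`2n ≡ 1`, `C(2m, m) = C(p ^ r - 1, m) ≡ (-1)ᵐ` and `x ^ (2n) = x ^ (p ^ r) x ≡ x²` by Fermat, so `u` is a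
`p`-adic unit with `u ≡ 16 · 5 / 16 = 5`.
-/

open Finset

theorem sum_range_quartic_centralBinom {K : Type*} [Field K] [CharZero K] (n : ℕ) :
    ∑ k ∈ range n, (4 * (k : K) + 3) * (k.centralBinom : K) ^ 4 /
        (16 * ((k : K) + 1) ^ 4 * 256 ^ k)
      = 1 - (8 * (n : K) ^ 2 + 4 * n + 1) * (n.centralBinom : K) ^ 4 / 256 ^ n := by
  induction n with
  | zero => simp
  | succ n ih =>
    have hrec : ((n : K) + 1) * ((n + 1).centralBinom : K) = 2 * (2 * n + 1) * n.centralBinom := by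
      exact_mod_cast congrArg (Nat.cast : ℕ → K) (Nat.succ_mul_centralBinom_succ n)
    have h4 : ((n : K) + 1) ^ 4 * ((n + 1).centralBinom : K) ^ 4
        = 16 * (2 * n + 1) ^ 4 * n.centralBinom ^ 4 := by
      rw [← mul_pow, hrec]; ring
    have hn : (n : K) + 1 ≠ 0 := Nat.cast_add_one_ne_zero n
    rw [sum_range_succ, ih]
    push_cast
    field_simp
    linear_combination (16 * (8 * (n : K) ^ 2 + 20 * n + 13) * 256 ^ n) * h4

theorem ZMod.natCast_choose_prime_pow_sub_one (p : ℕ) [Fact p.Prime] (r : ℕ) {j : ℕ}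
    (hj : j < p ^ r) : ((p ^ r - 1).choose j : ZMod p) = (-1) ^ j := by
  induction j with
  | zero => simp
  | succ j ih =>
    have hpascal : (p ^ r).choose (j + 1) = (p ^ r - 1).choose j + (p ^ r - 1).choose (j + 1) := by
      conv_lhs => rw [show p ^ r = p ^ r - 1 + 1 by omega, Nat.choose_succ_succ']
    have hdvd : p ∣ (p ^ r).choose (j + 1) :=
      Nat.Prime.dvd_choose_pow Fact.out (Nat.succ_ne_zero j) hj.ne
    rw [← ZMod.natCast_eq_zero_iff, hpascal, Nat.cast_add, ih (by omega)] at hdvd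
    linear_combination hdvd

namespace ZMod

variable {p r m : ℕ} [Fact p.Prime]

theorem two_mul_natCast_succ_eq_one (hr : r ≠ 0) (hm : p ^ r = 2 * m + 1) :
    (2 : ZMod p) * (m + 1) = 1 := by
  have h := congrArg (Nat.cast : ℕ → ZMod p) (show 2 * (m + 1) = p ^ r + 1 by omega)
  push_cast at h
  rwa [natCast_self, zero_pow hr, zero_add] at h

theorem natCast_centralBinom_of_prime_pow_eq (hm : p ^ r = 2 * m + 1) :
    (m.centralBinom : ZMod p) = (-1) ^ m := by
  rw [Nat.centralBinom_eq_two_mul_choose, show 2 * m = p ^ r - 1 by omega,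
    natCast_choose_prime_pow_sub_one p r (by omega)]

theorem sq_pow_succ_of_prime_pow_eq (hm : p ^ r = 2 * m + 1) (x : ZMod p) :
    (x ^ 2) ^ (m + 1) = x ^ 2 := by
  calc (x ^ 2) ^ (m + 1) = x ^ p ^ r * x := by rw [hm, ← pow_mul, ← pow_succ]; ring_nf
    _ = x ^ 2 := by rw [pow_card_pow, sq]

end ZMod

namespace PadicInt

variable {p : ℕ} [Fact p.Prime]

@[simp, norm_cast]
theorem coe_ofNat (n : ℕ) [n.AtLeastTwo] :
    ((no_index (OfNat.ofNat n) : ℤ_[p]) : ℚ_[p]) = OfNat.ofNat n :=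
  coe_natCast n

theorem toZMod_eq_zero_iff_dvd (x : ℤ_[p]) : toZMod x = 0 ↔ (p : ℤ_[p]) ∣ x := by
  rw [← RingHom.mem_ker, ker_toZMod, maximalIdeal_eq_span_p, Ideal.mem_span_singleton]

theorem isUnit_iff_toZMod_ne_zero {x : ℤ_[p]} : IsUnit x ↔ toZMod x ≠ 0 := by
  rw [Ne, toZMod_eq_zero_iff_dvd, ← norm_lt_one_iff_dvd, ← not_isUnit_iff, not_not]

theorem exists_div_eq_add_p_mul_of_toZMod_eq {x y : ℤ_[p]} (a : ℤ_[p]) (hy : toZMod y ≠ 0)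
    (hxy : toZMod x = toZMod (a * y)) :
    ∃ c : ℤ_[p], (x : ℚ_[p]) / y = ((a + p * c : ℤ_[p]) : ℚ_[p]) := by
  obtain ⟨u, rfl⟩ := isUnit_iff_toZMod_ne_zero.2 hy
  obtain ⟨c, hc⟩ := (toZMod_eq_zero_iff_dvd (x * ((u⁻¹ : ℤ_[p]ˣ) : ℤ_[p]) - a)).1 <| by
    rw [map_sub, map_mul, hxy, map_mul, mul_assoc, ← map_mul, u.mul_inv, map_one, mul_one,
      sub_self]
  have hx : x = (a + p * c) * u := by rw [← hc, add_sub_cancel, mul_assoc, u.inv_mul, mul_one]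
  have hu : ((u : ℤ_[p]) : ℚ_[p]) ≠ 0 := by simp
  exact ⟨c, by rw [div_eq_iff hu, hx, coe_mul]⟩

end PadicInt

theorem exists_quartic_centralBinom_div_eq_prime_pow_mul {p r m : ℕ} [Fact p.Prime] (hr : r ≠ 0)
    (hm : p ^ r = 2 * m + 1) :
    ∃ c : ℤ_[p], (8 * ((m + 1 : ℕ) : ℚ_[p]) ^ 2 + 4 * ((m + 1 : ℕ) : ℚ_[p]) + 1) *
        ((m + 1).centralBinom : ℚ_[p]) ^ 4 / 256 ^ (m + 1)
      = (p : ℚ_[p]) ^ (4 * r) * ((5 + p * c : ℤ_[p]) : ℚ_[p]) := by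
  have htwo := ZMod.two_mul_natCast_succ_eq_one hr hm
  have hden : PadicInt.toZMod (((m : ℤ_[p]) + 1) ^ 4 * 256 ^ (m + 1)) = 16 := by
    simp only [map_mul, map_pow, map_add, map_natCast, map_one, map_ofNat]
    rw [show (256 : ZMod p) = 16 ^ 2 by norm_num, ZMod.sq_pow_succ_of_prime_pow_eq hm]
    linear_combination
      (16 * (1 + 2 * ((m : ZMod p) + 1)) * (1 + 4 * ((m : ZMod p) + 1) ^ 2)) * htwo
  have hnum : PadicInt.toZMod (16 * (8 * ((m : ℤ_[p]) + 1) ^ 2 + 4 * ((m : ℤ_[p]) + 1) + 1) *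
      (m.centralBinom : ℤ_[p]) ^ 4) = 5 * 16 := by
    simp only [map_mul, map_pow, map_add, map_natCast, map_one, map_ofNat]
    rw [ZMod.natCast_centralBinom_of_prime_pow_eq hm, ← pow_mul, pow_mul',
      show (-1 : ZMod p) ^ 4 = 1 by norm_num, one_pow, mul_one]
    linear_combination (64 * ((m : ZMod p) + 2)) * htwo
  have h16 : (16 : ZMod p) ≠ 0 := by
    rw [show (16 : ZMod p) = 2 ^ 4 by norm_num]
    exact ((IsUnit.of_mul_eq_one _ htwo).pow 4).ne_zero
  obtain ⟨c, hc⟩ := PadicInt.exists_div_eq_add_p_mul_of_toZMod_eq 5 (hden ▸ h16)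
    (by rw [hnum, map_mul, hden, map_ofNat])
  refine ⟨c, ?_⟩
  have hn : (m : ℚ_[p]) + 1 ≠ 0 := Nat.cast_add_one_ne_zero m
  have hC : ((m + 1).centralBinom : ℚ_[p]) = 2 * (p : ℚ_[p]) ^ r * m.centralBinom / (m + 1) := by
    rw [eq_div_iff hn, mul_comm]
    exact_mod_cast congrArg (Nat.cast : ℕ → ℚ_[p]) (hm ▸ Nat.succ_mul_centralBinom_succ m)
  push_cast at hc ⊢
  rw [div_eq_iff (mul_ne_zero (pow_ne_zero _ hn) (pow_ne_zero _ (by norm_num)))] at hc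
  rw [hC]
  field_simp
  linear_combination (p : ℚ_[p]) ^ (4 * r) * hc

theorem supercongruence_padic_quartic_half (p : ℕ) [Fact p.Prime] (hp : Odd p)
    (r : ℕ) (hr : 1 ≤ r) :
    ∃ c : ℤ_[p],
      ∑ k ∈ Finset.range ((p ^ r - 1) / 2 + 1),
          (4 * (k : ℚ_[p]) + 3) * (Nat.centralBinom k : ℚ_[p]) ^ 4 /
            (16 * ((k : ℚ_[p]) + 1) ^ 4 * 256 ^ k)
        = ((1 - 5 * (p : ℤ_[p]) ^ (4 * r) + (p : ℤ_[p]) ^ (4 * r + 1) * c : ℤ_[p]) : ℚ_[p]) := by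
  obtain ⟨m, hm⟩ : ∃ m, p ^ r = 2 * m + 1 := hp.pow
  obtain ⟨c, hc⟩ := exists_quartic_centralBinom_div_eq_prime_pow_mul (by omega : r ≠ 0) hm
  refine ⟨-c, ?_⟩
  rw [show (p ^ r - 1) / 2 + 1 = m + 1 by omega, sum_range_quartic_centralBinom, hc]
  push_cast
  ring
end

section
/- Let p be an odd prime and r ≥ 1. Then sum_{k=0}^{p^r-2} (4k+3)/(16(k+1)^4 · 256^k) · binom(2k,k)^4 ≡ 1 - 5p^{4r} (mod p^{4r+1}) as p-adic integers. -/
lemma cb_step {F : Type*} [Field F] [CharZero F] (x t m : F) (ht : t ≠ 0) (hn1 : (m+1) ≠ 0) :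
    1 - (8 * m ^ 2 + 4 * m + 1) * x ^ 4 / t
      + (4 * m + 3) * x ^ 4 / (16 * (m + 1) ^ 4 * t)
    = 1 - (8 * (m+1) ^ 2 + 4 * (m+1) + 1) * (2 * (2 * m + 1) * x / (m + 1)) ^ 4 / (t * 256) := by
  have hD : (16 * (m + 1) ^ 4 * t) ≠ 0 :=
    mul_ne_zero (mul_ne_zero (by norm_num) (pow_ne_zero _ hn1)) ht
  have hD2 : ((m + 1) ^ 4 * (t * 256)) ≠ 0 :=
    mul_ne_zero (pow_ne_zero _ hn1) (mul_ne_zero ht (by norm_num))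
  rw [div_pow, ← mul_div_assoc, div_div, sub_add, sub_right_inj, div_sub_div _ _ ht hD,
    div_eq_div_iff (mul_ne_zero ht hD) hD2]
  ring

lemma key_sum {F : Type*} [Field F] [CharZero F] (n : ℕ) :
    ∑ k ∈ Finset.range n,
        (4 * (k : F) + 3) * (Nat.centralBinom k : F) ^ 4 /
          (16 * ((k : F) + 1) ^ 4 * 256 ^ k)
      = 1 - (8 * (n : F) ^ 2 + 4 * n + 1) * (Nat.centralBinom n : F) ^ 4 / 256 ^ n := by
  induction n with
  | zero => simp [Nat.centralBinom]
  | succ n ih =>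
    rw [Finset.sum_range_succ, ih]
    have hn1 : ((n : F) + 1) ≠ 0 := Nat.cast_add_one_ne_zero n
    have hC : (Nat.centralBinom (n + 1) : F)
        = 2 * (2 * n + 1) * (Nat.centralBinom n : F) / (n + 1) := by
      rw [eq_div_iff hn1]
      have h3 : (((n+1) * Nat.centralBinom (n+1) : ℕ) : F)
          = ((2 * (2*n+1) * Nat.centralBinom n : ℕ) : F) := by
        rw [Nat.succ_mul_centralBinom_succ]
      push_cast at h3
      linear_combination h3
    have h256 : (256 : F) ^ n ≠ 0 := pow_ne_zero _ (by norm_num)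
    rw [hC]
    push_cast
    linear_combination cb_step (Nat.centralBinom n : F) ((256:F)^n) (n : F) h256 hn1

lemma cb_mod (p : ℕ) [Fact p.Prime] (r : ℕ) :
    ((Nat.centralBinom (p ^ r) : ZMod p)) = 2 := by
  induction r with
  | zero => norm_num [Nat.centralBinom]
  | succ r ih =>
    have hp := (Fact.out : p.Prime)
    have h := @Choose.choose_modEq_choose_mod_mul_choose_div (2 * p ^ (r+1)) (p ^ (r+1)) p _
    have h1 : (2 * p ^ (r + 1)) % p = 0 := by simp [Nat.mul_mod, Nat.pow_mod, Nat.mod_self]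
    have h2 : (p ^ (r + 1)) % p = 0 := by simp [Nat.pow_mod, Nat.mod_self]
    have h3 : (2 * p ^ (r + 1)) / p = 2 * p ^ r := by
      rw [pow_succ, ← mul_assoc, Nat.mul_div_cancel _ hp.pos]
    have h4 : (p ^ (r + 1)) / p = p ^ r := by rw [pow_succ, Nat.mul_div_cancel _ hp.pos]
    rw [h1, h2, h3, h4] at h
    have := (ZMod.intCast_eq_intCast_iff _ _ _).mpr h
    push_cast at this
    simpa [Nat.centralBinom, this] using ih

theorem supercongruence_padic_quartic_full (p : ℕ) [Fact p.Prime] (hp : Odd p)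
    (r : ℕ) (hr : 1 ≤ r) :
    ∃ c : ℤ_[p],
      ∑ k ∈ Finset.range (p ^ r - 1),
          (4 * (k : ℚ_[p]) + 3) * (Nat.centralBinom k : ℚ_[p]) ^ 4 /
            (16 * ((k : ℚ_[p]) + 1) ^ 4 * 256 ^ k)
        = ((1 - 5 * (p : ℤ_[p]) ^ (4 * r) + (p : ℤ_[p]) ^ (4 * r + 1) * c : ℤ_[p]) : ℚ_[p]) := by
  have hprime := (Fact.out : p.Prime)
  have hp2 : p ≠ 2 := by rintro rfl; exact (Nat.not_odd_iff_even.mpr even_two) hp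
  set N := p ^ r with hN
  have hN1 : 1 ≤ N := Nat.one_le_pow _ _ hprime.pos
  set n := N - 1 with hn
  have hnN : n + 1 = N := Nat.sub_add_cancel hN1
  set B := Nat.centralBinom N with hB
  set a : ℕ := (8 * n ^ 2 + 4 * n + 1) * B ^ 4 with ha
  set d : ℕ := 16 * (2 * n + 1) ^ 4 * 256 ^ n with hd
  -- congruence a ≡ 5 d [MOD p]
  have hNmod : ((N : ZMod p)) = 0 := by
    rw [hN]
    push_cast
    rw [ZMod.natCast_self]
    exact zero_pow (by omega)
  have hnmod : ((n : ZMod p)) = -1 := by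
    have h : ((n : ZMod p)) + 1 = 0 := by
      have h2 := congrArg (Nat.cast : ℕ → ZMod p) hnN
      push_cast at h2
      rw [h2, hNmod]
    exact eq_neg_of_add_eq_zero_left h
  have hBmod : (B : ZMod p) = 2 := cb_mod p r
  have h2ne : (2 : ZMod p) ≠ 0 := by
    have : ¬ p ∣ 2 := fun hdvd => hp2 ((Nat.prime_dvd_prime_iff_eq hprime Nat.prime_two).mp hdvd)
    have h2 : ((2:ℕ) : ZMod p) ≠ 0 := by
      rw [Ne, ZMod.natCast_eq_zero_iff]; exact this
    simpa using h2
  have h256mod : ((256 : ZMod p)) ^ n = 1 := by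
    obtain ⟨t, htt⟩ : (p - 1) ∣ n := by
      have h := Nat.sub_dvd_pow_sub_pow p 1 r
      simpa [hn, hN] using h
    have h28 : (256 : ZMod p) = 2 ^ 8 := by norm_num
    have h8 : 8 * ((p-1) * t) = (p - 1) * (8 * t) := by ring
    rw [h28, ← pow_mul, htt, h8, pow_mul, ZMod.pow_card_sub_one_eq_one h2ne, one_pow]
  -- a ≡ 5 d mod p
  have hZ : (((a : ℤ) - 5 * d : ℤ) : ZMod p) = 0 := by
    push_cast [ha, hd]
    rw [hnmod, hBmod, h256mod]
    ring
  obtain ⟨z, hz⟩ : (p : ℤ) ∣ ((a : ℤ) - 5 * d) := (ZMod.intCast_zmod_eq_zero_iff_dvd _ _).mp hZ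
  -- d is not divisible by p
  have hdmod : ((d : ZMod p)) = 16 := by
    push_cast [hd]
    rw [hnmod, h256mod]
    ring
  have hdnd : ¬ (p : ℤ) ∣ (d : ℤ) := by
    intro hdvd
    have : (d : ZMod p) = 0 := (ZMod.natCast_eq_zero_iff _ _).mpr (by exact_mod_cast hdvd)
    rw [hdmod] at this
    have h16 : (16 : ZMod p) = 2 ^ 4 := by norm_num
    exact pow_ne_zero 4 h2ne (by rw [← h16]; exact this)
  have hdnorm : ‖((d : ℤ) : ℚ_[p])‖ = 1 := by
    refine le_antisymm (Padic.norm_int_le_one _) (not_lt.mp ?_)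
    rw [Padic.norm_intCast_lt_one_iff]
    exact hdnd
  set x : ℚ_[p] := -(((z : ℤ) : ℚ_[p]) / ((d : ℤ) : ℚ_[p])) with hx
  have hxnorm : ‖x‖ ≤ 1 := by
    rw [hx, norm_neg, norm_div, hdnorm, div_one]
    exact Padic.norm_int_le_one z
  refine ⟨⟨x, hxnorm⟩, ?_⟩
  rw [key_sum]
  have hcoe : ((1 - 5 * (p : ℤ_[p]) ^ (4 * r) + (p : ℤ_[p]) ^ (4 * r + 1) * ⟨x, hxnorm⟩ : ℤ_[p]) : ℚ_[p])
      = 1 - 5 * (p : ℚ_[p]) ^ (4 * r) + (p : ℚ_[p]) ^ (4 * r + 1) * x := by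
    push_cast [PadicInt.coe_sub, PadicInt.coe_add, PadicInt.coe_mul, PadicInt.coe_pow,
      PadicInt.coe_one, PadicInt.coe_natCast]
    rfl
  rw [hcoe]
  -- arithmetic in ℚ_[p]
  set P : ℚ_[p] := (p : ℚ_[p]) with hP
  have hNP : ((N : ℕ) : ℚ_[p]) = P ^ r := by rw [hN]; push_cast; rfl
  have hNB : ((N : ℕ) : ℚ_[p]) * (B : ℚ_[p])
      = 2 * (2 * (n : ℚ_[p]) + 1) * (Nat.centralBinom n : ℚ_[p]) := by
    have h := Nat.succ_mul_centralBinom_succ n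
    rw [hnN] at h
    exact_mod_cast congrArg (Nat.cast : ℕ → ℚ_[p]) h
  have hdq : ((d : ℕ) : ℚ_[p]) ≠ 0 := Nat.cast_ne_zero.mpr (by positivity)
  have h256q : ((256 : ℚ_[p])) ^ n ≠ 0 := pow_ne_zero _ (by norm_num)
  have hzq : ((a : ℕ) : ℚ_[p]) = 5 * ((d : ℕ) : ℚ_[p]) + P * ((z : ℤ) : ℚ_[p]) := by
    have h : ((a : ℤ) : ℚ_[p]) = ((5 * (d:ℤ) + (p:ℤ) * z : ℤ) : ℚ_[p]) := by
      rw [show (5 * (d:ℤ) + (p:ℤ) * z : ℤ) = (a : ℤ) by linarith [hz]]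
    push_cast at h
    push_cast
    rw [h]
  have hE : (8 * (n : ℚ_[p]) ^ 2 + 4 * n + 1) * (Nat.centralBinom n : ℚ_[p]) ^ 4 / 256 ^ n
      = P ^ (4 * r) * ((a : ℕ) : ℚ_[p]) / ((d : ℕ) : ℚ_[p]) := by
    rw [div_eq_div_iff h256q hdq]
    push_cast [ha, hd]
    set u : ℚ_[p] := 2 * (2 * (n : ℚ_[p]) + 1) * (Nat.centralBinom n : ℚ_[p]) with hu
    set v : ℚ_[p] := ((N : ℕ) : ℚ_[p]) * (B : ℚ_[p]) with hv
    linear_combination ((8 * (n : ℚ_[p]) ^ 2 + 4 * n + 1) * (256:ℚ_[p]) ^ n) *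
      ( (((N : ℕ) : ℚ_[p])^3 + ((N : ℕ) : ℚ_[p])^2 * P^r + ((N : ℕ) : ℚ_[p]) * (P^r)^2 + (P^r)^3) * ((B : ℚ_[p]))^4 * hNP
        - (u^3 + u^2*v + u*v^2 + v^3) * hNB )
  rw [hE]
  have hdq' : ((d : ℤ) : ℚ_[p]) = ((d : ℕ) : ℚ_[p]) := by push_cast; ring
  rw [hx, hdq']
  have hdd1 : ((d : ℕ) : ℚ_[p]) / ((d : ℕ) : ℚ_[p]) = 1 := div_self hdq
  linear_combination (-(P^(4*r)) / ((d:ℕ):ℚ_[p])) * hzq - 5 * P^(4*r) * hdd1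
end

section
/- Let p be an odd prime and r ≥ 1. Then sum_{k=0}^{(p^r-1)/2} (4k+3)/(4(k+1)^2 · 16^k) · binom(2k,k)^2 ≡ 1 - p^{2r} (mod p^{2r+1}) as p-adic integers. -/
lemma key_step (p : ℕ) [Fact p.Prime] (a b y s : ℚ_[p]) (hy : y ≠ 0) (hs : s ≠ 0)
    (h : y * b = 2 * (2 * y - 1) * a) :
    1 - a ^ 2 / s + (4 * y - 1) * a ^ 2 / (4 * y ^ 2 * s) = 1 - b ^ 2 / (16 * s) := by
  have h1 : b ^ 2 * y ^ 2 = 4 * (2 * y - 1) ^ 2 * a ^ 2 := by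
    linear_combination (y * b + 2 * (2 * y - 1) * a) * h
  have hd1 : 4 * y ^ 2 * s ≠ 0 := by
    exact mul_ne_zero (mul_ne_zero (by norm_num) (pow_ne_zero _ hy)) hs
  have hd2 : (16 : ℚ_[p]) * s ≠ 0 := mul_ne_zero (by norm_num) hs
  have e : (4 * y - 1) * a ^ 2 / (4 * y ^ 2 * s) + b ^ 2 / (16 * s) = a ^ 2 / s := by
    rw [div_add_div _ _ hd1 hd2, div_eq_div_iff (mul_ne_zero hd1 hd2) hs]
    ring_nf
    linear_combination (4 * s ^ 2) * h1
  linear_combination e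

lemma telescope (p : ℕ) [Fact p.Prime] (n : ℕ) :
    ∑ k ∈ Finset.range (n + 1),
        (4 * (k : ℚ_[p]) + 3) * (Nat.centralBinom k : ℚ_[p]) ^ 2 /
          (4 * ((k : ℚ_[p]) + 1) ^ 2 * 16 ^ k)
      = 1 - (Nat.centralBinom (n + 1) : ℚ_[p]) ^ 2 / 16 ^ (n + 1) := by
  induction n with
  | zero =>
    simp [Nat.centralBinom]
    norm_num
  | succ n ih =>
    rw [Finset.sum_range_succ, ih]
    have hrec := Nat.succ_mul_centralBinom_succ (n + 1)
    have hrec' : (((n + 1 : ℕ) : ℚ_[p]) + 1) * (Nat.centralBinom (n + 2) : ℚ_[p])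
        = 2 * (2 * (((n + 1 : ℕ) : ℚ_[p]) + 1) - 1) * (Nat.centralBinom (n + 1) : ℚ_[p]) := by
      have := congrArg (Nat.cast : ℕ → ℚ_[p]) hrec
      push_cast at this ⊢
      linear_combination this
    have hy : (((n + 1 : ℕ) : ℚ_[p]) + 1) ≠ 0 := by
      have h : (((n + 1 : ℕ) : ℚ_[p]) + 1) = ((n + 2 : ℕ) : ℚ_[p]) := by push_cast; ring
      rw [h]; exact Nat.cast_ne_zero.mpr (by omega)
    have hs : ((16 : ℚ_[p]) ^ (n + 1)) ≠ 0 := pow_ne_zero _ (by norm_num)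
    have h2 := key_step p (Nat.centralBinom (n + 1) : ℚ_[p]) (Nat.centralBinom (n + 2) : ℚ_[p])
      (((n + 1 : ℕ) : ℚ_[p]) + 1) ((16 : ℚ_[p]) ^ (n + 1)) hy hs hrec'
    rw [pow_succ (16 : ℚ_[p]) (n + 1)]
    rw [show ((16 : ℚ_[p]) ^ (n + 1) * 16) = 16 * 16 ^ (n + 1) by ring]
    linear_combination h2

lemma sq_choose_base (p : ℕ) [hp : Fact p.Prime] :
    ∀ d, d ≤ p - 1 → ((Nat.choose (p - 1) d : ZMod p)) ^ 2 = 1 := by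
  intro d
  induction d with
  | zero => simp
  | succ d ih =>
    intro hd
    have ih' := ih (by omega)
    have h := Nat.choose_succ_right_eq (p - 1) d
    have hp2 : 2 ≤ p := hp.out.two_le
    have hsub : p - 1 - d = p - (d + 1) := by omega
    rw [hsub] at h
    have h' : ((Nat.choose (p - 1) (d + 1) : ZMod p)) * ((d : ZMod p) + 1)
        = (Nat.choose (p - 1) d : ZMod p) * (((p - (d + 1) : ℕ) : ZMod p)) := by
      have := congrArg (Nat.cast : ℕ → ZMod p) h
      push_cast at this
      exact this
    have hcast : (((p - (d + 1) : ℕ) : ZMod p)) = -((d : ZMod p) + 1) := by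
      have hps : ((p : ZMod p)) = 0 := ZMod.natCast_self p
      rw [Nat.cast_sub (by omega), hps]
      push_cast
      ring
    rw [hcast] at h'
    have hne : ((d : ZMod p) + 1) ≠ 0 := by
      intro h0
      have h1 : (((d + 1 : ℕ)) : ZMod p) = 0 := by push_cast; exact h0
      rw [ZMod.natCast_eq_zero_iff] at h1
      have := Nat.le_of_dvd (by omega) h1
      omega
    have key : (Nat.choose (p - 1) (d + 1) : ZMod p) ^ 2 * ((d : ZMod p) + 1) ^ 2
        = 1 * ((d : ZMod p) + 1) ^ 2 := by
      rw [one_mul]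
      calc (Nat.choose (p - 1) (d + 1) : ZMod p) ^ 2 * ((d : ZMod p) + 1) ^ 2
          = ((Nat.choose (p - 1) (d + 1) : ZMod p) * ((d : ZMod p) + 1)) ^ 2 := by ring
        _ = ((Nat.choose (p - 1) d : ZMod p) * -((d : ZMod p) + 1)) ^ 2 := by rw [h']
        _ = (Nat.choose (p - 1) d : ZMod p) ^ 2 * ((d : ZMod p) + 1) ^ 2 := by ring
        _ = ((d : ZMod p) + 1) ^ 2 := by rw [ih', one_mul]
    exact mul_right_cancel₀ (pow_ne_zero _ hne) key

lemma sq_choose_pow (p : ℕ) [hp : Fact p.Prime] :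
    ∀ s, ∀ i, i ≤ p ^ s - 1 → ((Nat.choose (p ^ s - 1) i : ZMod p)) ^ 2 = 1 := by
  intro s
  induction s with
  | zero =>
    intro i hi
    norm_num at hi
    subst hi
    simp
  | succ s ih =>
    intro i hi
    have hp2 : 2 ≤ p := hp.out.two_le
    have hq1 : 1 ≤ p ^ s := Nat.one_le_pow _ _ (by omega)
    have hdecomp : p ^ (s + 1) - 1 = p * (p ^ s - 1) + (p - 1) := by
      have h : p ^ (s + 1) = p * p ^ s := by rw [pow_succ]; ring
      zify [hq1, show 1 ≤ p ^ (s+1) from Nat.one_le_pow _ _ (by omega), show 1 ≤ p by omega] at h ⊢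
      linarith
    have hmod : (p ^ (s + 1) - 1) % p = p - 1 := by
      rw [hdecomp, Nat.mul_add_mod]
      exact Nat.mod_eq_of_lt (by omega)
    have hdiv : (p ^ (s + 1) - 1) / p = p ^ s - 1 := by
      rw [hdecomp, Nat.mul_add_div (by omega : 0 < p)]
      rw [Nat.div_eq_of_lt (by omega), Nat.add_zero]
    have hlucas := Choose.choose_modEq_choose_mod_mul_choose_div
      (n := p ^ (s + 1) - 1) (k := i) (p := p)
    have heq : ((Nat.choose (p ^ (s + 1) - 1) i : ZMod p))
        = ((Nat.choose ((p ^ (s + 1) - 1) % p) (i % p) : ZMod p))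
          * ((Nat.choose ((p ^ (s + 1) - 1) / p) (i / p) : ZMod p)) := by
      have := (ZMod.intCast_eq_intCast_iff _ _ _).mpr hlucas
      push_cast at this
      exact_mod_cast this
    have hb1 : i % p ≤ p - 1 := by
      have := Nat.mod_lt i (show 0 < p by omega)
      omega
    have hb2 : i / p ≤ p ^ s - 1 := by
      calc i / p ≤ (p ^ (s + 1) - 1) / p := Nat.div_le_div_right hi
        _ = p ^ s - 1 := hdiv
    rw [heq, hmod, hdiv, mul_pow, sq_choose_base p (i % p) hb1, ih (i / p) hb2, mul_one]

lemma four_pow_pow (p : ℕ) [hp : Fact p.Prime] (r : ℕ) : (4 : ZMod p) ^ (p ^ r) = 4 := by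
  induction r with
  | zero => simp
  | succ r ih => rw [pow_succ, pow_mul, ih, ZMod.pow_card]

lemma key_arith (p r : ℕ) [hp : Fact p.Prime] (hodd : Odd p) (hr : 1 ≤ r)
    (j : ℕ) (hj : p ^ r = 2 * j + 1) :
    ∃ (a : ℕ) (t : ℤ), Nat.centralBinom (j + 1) = p ^ r * (2 * a) ∧
      (2 * (a : ℤ)) ^ 2 = 16 ^ (j + 1) + p * t := by
  have hp2 : 2 ≤ p := hp.out.two_le
  have hp3 : 3 ≤ p := by
    rcases hodd with ⟨m, hm⟩
    omega
  have hpr : p ≤ p ^ r := Nat.le_self_pow (by omega) p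
  have hj1 : 1 ≤ j := by omega
  -- central binomial as 2 * choose
  have hsymm : Nat.choose (2 * j + 1) (j + 1) = Nat.choose (2 * j + 1) j := by
    have := Nat.choose_symm (show j + 1 ≤ 2 * j + 1 by omega)
    rw [show 2 * j + 1 - (j + 1) = j from by omega] at this
    exact this.symm
  have hcb : Nat.centralBinom (j + 1) = 2 * Nat.choose (2 * j + 1) j := by
    show Nat.choose (2 * (j + 1)) (j + 1) = _
    rw [show 2 * (j + 1) = (2 * j + 1) + 1 from by ring, Nat.choose_succ_succ, hsymm]
    ring
  -- the key divisibility identity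
  have hkey : (2 * j + 1) * Nat.choose (2 * j) (j - 1) = Nat.choose (2 * j + 1) j * j := by
    have h := Nat.add_one_mul_choose_eq (2 * j) (j - 1)
    rwa [show j - 1 + 1 = j from by omega] at h
  have hpj : ¬ p ∣ j := by
    intro hdvd
    obtain ⟨k, hk⟩ := hdvd
    have h1 : p ∣ p ^ r := dvd_pow_self p (by omega)
    rw [hj, hk] at h1
    have h2 : p ∣ 1 := (Nat.dvd_add_right ⟨2 * k, by ring⟩).mp h1
    have h3 := Nat.le_of_dvd Nat.one_pos h2
    omega
  have hcop : Nat.Coprime (p ^ r) j :=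
    Nat.Coprime.pow_left r ((Nat.Prime.coprime_iff_not_dvd hp.out).mpr hpj)
  have hdvd : p ^ r ∣ Nat.choose (2 * j + 1) j := by
    apply Nat.Coprime.dvd_of_dvd_mul_right hcop
    rw [← hkey, ← hj]
    exact Dvd.intro _ rfl
  obtain ⟨a, ha⟩ := hdvd
  have hab : a * j = Nat.choose (2 * j) (j - 1) := by
    have h1 : (2 * j + 1) * (a * j) = (2 * j + 1) * Nat.choose (2 * j) (j - 1) := by
      rw [hkey, ha, ← hj]
      ring
    exact Nat.eq_of_mul_eq_mul_left (by omega) h1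
  -- mod p computations
  have hB : ((Nat.choose (2 * j) (j - 1) : ZMod p)) ^ 2 = 1 := by
    have := sq_choose_pow p r (j - 1) (by omega)
    rwa [show p ^ r - 1 = 2 * j from by omega] at this
  have h2j : 2 * (j : ZMod p) + 1 = 0 := by
    have := congrArg (Nat.cast : ℕ → ZMod p) hj
    push_cast at this
    rw [ZMod.natCast_self, zero_pow (by omega : r ≠ 0)] at this
    linear_combination -this
  have habz : (a : ZMod p) * (j : ZMod p) = (Nat.choose (2 * j) (j - 1) : ZMod p) := by
    exact_mod_cast congrArg (Nat.cast : ℕ → ZMod p) hab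
  have ha4 : (a : ZMod p) ^ 2 = 4 := by
    linear_combination ((a : ZMod p) ^ 2 * (1 - 2 * (j : ZMod p))) * h2j
      + 4 * ((a : ZMod p) * (j : ZMod p) + (Nat.choose (2 * j) (j - 1) : ZMod p)) * habz + 4 * hB
  have h16 : (16 : ZMod p) ^ (j + 1) = 16 := by
    have h4 : (16 : ZMod p) ^ (j + 1) = (4 : ZMod p) ^ (p ^ r) * 4 := by
      rw [show (16 : ZMod p) = 4 ^ 2 by norm_num, ← pow_mul,
        show 2 * (j + 1) = (2 * j + 1) + 1 from by ring, pow_succ, ← hj]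
    rw [h4, four_pow_pow]
    norm_num
  have hdvdp : (p : ℤ) ∣ ((2 * (a : ℤ)) ^ 2 - 16 ^ (j + 1)) := by
    rw [← ZMod.intCast_zmod_eq_zero_iff_dvd]
    push_cast
    linear_combination 4 * ha4 - h16
  obtain ⟨t, ht⟩ := hdvdp
  exact ⟨a, t, by rw [hcb, ha]; ring, by linarith [ht]⟩
theorem supercongruence_padic_quadratic_half (p : ℕ) [Fact p.Prime] (hp : Odd p)
    (r : ℕ) (hr : 1 ≤ r) :
    ∃ c : ℤ_[p],
      ∑ k ∈ Finset.range ((p ^ r - 1) / 2 + 1),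
          (4 * (k : ℚ_[p]) + 3) * (Nat.centralBinom k : ℚ_[p]) ^ 2 /
            (4 * ((k : ℚ_[p]) + 1) ^ 2 * 16 ^ k)
        = ((1 - (p : ℤ_[p]) ^ (2 * r) + (p : ℤ_[p]) ^ (2 * r + 1) * c : ℤ_[p]) : ℚ_[p]) := by
  have hprime : p.Prime := Fact.out
  have hp2 : 2 ≤ p := hprime.two_le
  obtain ⟨j, hj⟩ : ∃ j, p ^ r = 2 * j + 1 := by
    have : Odd (p ^ r) := hp.pow
    obtain ⟨j, hjj⟩ := this
    exact ⟨j, by omega⟩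
  have hrange : (p ^ r - 1) / 2 = j := by omega
  obtain ⟨a, t, hC, ht⟩ := key_arith p r hp hr j hj
  -- 16 is a unit in ℤ_[p]
  have hunit : IsUnit ((16 : ℤ_[p]) ^ (j + 1)) := by
    apply IsUnit.pow
    rw [PadicInt.isUnit_iff]
    apply le_antisymm (PadicInt.norm_le_one _)
    by_contra hlt
    push_neg at hlt
    have h16 : ((16 : ℤ) : ℤ_[p]) = (16 : ℤ_[p]) := by push_cast; ring
    rw [← h16, PadicInt.norm_int_lt_one_iff_dvd] at hlt
    have hdvd : p ∣ 16 := by exact_mod_cast hlt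
    have hdvd2 : p ∣ 2 := hprime.dvd_of_dvd_pow (show p ∣ 2 ^ 4 by norm_num [hdvd])
    have := Nat.le_of_dvd (by norm_num) hdvd2
    have := Nat.odd_iff.mp hp
    omega
  obtain ⟨v, hv⟩ := isUnit_iff_exists_inv.mp hunit
  refine ⟨-((t : ℤ_[p]) * v), ?_⟩
  rw [hrange, telescope p j]
  -- cast everything to ℚ_[p]
  have hv' : (16 : ℚ_[p]) ^ (j + 1) * ((v : ℤ_[p]) : ℚ_[p]) = 1 := by
    have := congrArg (fun z : ℤ_[p] => (z : ℚ_[p])) hv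
    push_cast at this
    exact_mod_cast this
  have hCq : ((Nat.centralBinom (j + 1) : ℕ) : ℚ_[p])
      = (p : ℚ_[p]) ^ r * (2 * (a : ℚ_[p])) := by
    exact_mod_cast congrArg (Nat.cast : ℕ → ℚ_[p]) hC
  have htq : (2 * (a : ℚ_[p])) ^ 2 = 16 ^ (j + 1) + (p : ℚ_[p]) * (t : ℚ_[p]) := by
    exact_mod_cast congrArg (Int.cast : ℤ → ℚ_[p]) ht
  push_cast
  rw [hCq]
  have hS : ((16 : ℚ_[p]) ^ (j + 1)) ≠ 0 := left_ne_zero_of_mul_eq_one hv'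
  have hVinv : (((v : ℤ_[p]) : ℚ_[p])) = ((16 : ℚ_[p]) ^ (j + 1))⁻¹ :=
    eq_inv_of_mul_eq_one_right hv'
  rw [hVinv]
  have hSinv : (16 : ℚ_[p]) ^ (j + 1) * ((16 : ℚ_[p]) ^ (j + 1))⁻¹ = 1 := mul_inv_cancel₀ hS
  set P := (p : ℚ_[p])
  set A := (a : ℚ_[p])
  set T := ((t : ℤ) : ℚ_[p])
  set U := ((16 : ℚ_[p]) ^ (j + 1))⁻¹
  rw [div_eq_mul_inv]
  linear_combination (-(P ^ (2 * r)) * U) * htq + (-(P ^ (2 * r))) * hSinv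
end

section
/- For every odd integer m > 1, the q-binomial coefficient qbinom(m-1, (m-1)/2) satisfies qbinom(m-1,(m-1)/2) ≡ (-1)^{(m-1)/2} q^{(1-m^2)/8} (mod Φ_m(q)), i.e., Φ_m(q) divides qbinom(m-1,(m-1)/2) - (-1)^{(m-1)/2} q^{(1-m^2)/8} in ℤ[q, q^{-1}]. -/
open RatFunc

/-- q-shifted factorial `(a;b)_m = ∏_{j=0}^{m-1} (1 - a b^j)`. -/
noncomputable def qpoch (a b : RatFunc ℚ) (m : ℕ) : RatFunc ℚ :=
  ∏ j ∈ Finset.range m, (1 - a * b ^ j)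

/-- q-integer `[m] = 1 + q + ⋯ + q^{m-1}`. -/
noncomputable def qint (m : ℕ) : RatFunc ℚ := ∑ i ∈ Finset.range m, q ^ i

/-- q-binomial coefficient `(q;q)_n / ((q;q)_k (q;q)_{n-k})`. -/
noncomputable def qbinom (n k : ℕ) : RatFunc ℚ :=
  qpoch q q n / (qpoch q q k * qpoch q q (n - k))

/-- the natural inclusion `ℤ[q] → ℚ(q)` -/
noncomputable def ι (P : Polynomial ℤ) : RatFunc ℚ :=
  algebraMap (Polynomial ℚ) (RatFunc ℚ) (P.map (Int.castRingHom ℚ))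

/-!
Write `m = 2k + 1`. The Gaussian binomial `[2k, k]` is a polynomial `G` with
`G · (q;q)_k = ∏_{j<k} (1 - q^{k+1+j})`. At a primitive `m`-th root of unity `ζ` each factor
`1 - ζ^{m-i}` equals `-ζ^{-i} (1 - ζ^i)`, so `G(ζ) ζ^N = (-1)^k` with `N = k(k+1)/2`, the
factor `(ζ;ζ)_k` being nonzero. Hence `Φ_m` divides `G X^N - (-1)^k` in `ℤ[X]`, and
`N = (m² - 1)/8`.
-/

open Finset
open Polynomial hiding X

/-- The q-Pochhammer symbol `(x;x)_n`. -/
def qPochhammer {R : Type*} [CommRing R] (x : R) (n : ℕ) : R :=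
  ∏ j ∈ range n, (1 - x ^ (j + 1))

section qPochhammer

variable {R S : Type*} [CommRing R] [CommRing S]

@[simp]
lemma qPochhammer_zero (x : R) : qPochhammer x 0 = 1 := prod_range_zero _

lemma qPochhammer_succ (x : R) (n : ℕ) :
    qPochhammer x (n + 1) = qPochhammer x n * (1 - x ^ (n + 1)) :=
  prod_range_succ _ _

lemma qPochhammer_add (x : R) (a b : ℕ) :
    qPochhammer x (a + b) = qPochhammer x a * ∏ j ∈ range b, (1 - x ^ (a + j + 1)) :=
  prod_range_add _ _ _

lemma map_qPochhammer {F : Type*} [FunLike F R S] [RingHomClass F R S] (f : F) (x : R)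
    (n : ℕ) : f (qPochhammer x n) = qPochhammer (f x) n := by
  simp [qPochhammer, map_prod]

lemma qPochhammer_ne_zero [IsDomain R] {x : R} {n : ℕ} (hx : ∀ j < n, x ^ (j + 1) ≠ 1) :
    qPochhammer x n ≠ 0 :=
  prod_ne_zero_iff.mpr fun j hj => sub_ne_zero.mpr (hx j (mem_range.mp hj)).symm

lemma IsPrimitiveRoot.qPochhammer_ne_zero [IsDomain R] {ζ : R} {m n : ℕ}
    (hζ : IsPrimitiveRoot ζ m) (hn : n < m) : qPochhammer ζ n ≠ 0 :=
  _root_.qPochhammer_ne_zero fun j hj => hζ.pow_ne_one_of_pos_of_lt j.succ_ne_zero (by omega)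

lemma qPochhammer_X_ne_zero (n : ℕ) : qPochhammer (Polynomial.X : ℤ[X]) n ≠ 0 :=
  _root_.qPochhammer_ne_zero fun j _ h => by
    simpa using congrArg natDegree h

/-- At a `(2k+1)`-th root of unity, `1 - x^{2k+1-i} = -x^{-i} (1 - x^i)` for `1 ≤ i ≤ k`. -/
lemma prod_one_sub_pow_mul_pow_of_pow_eq_one {x : R} {k : ℕ} (hx : x ^ (2 * k + 1) = 1) :
    (∏ j ∈ range k, (1 - x ^ (k + j + 1))) * x ^ (∑ i ∈ range (k + 1), i) =
      (-1) ^ k * qPochhammer x k := by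
  have hfactor : ∀ j ∈ range k, (1 - x ^ (k + (k - 1 - j) + 1)) * x ^ (j + 1) =
      -1 * (1 - x ^ (j + 1)) := by
    intro j hj
    have hexp : k + (k - 1 - j) + 1 + (j + 1) = 2 * k + 1 := by
      have := mem_range.mp hj; omega
    rw [sub_mul, one_mul, ← pow_add, hexp, hx]
    ring
  rw [← prod_range_reflect, sum_range_succ', add_zero, ← prod_pow_eq_pow_sum,
    ← prod_mul_distrib, prod_congr rfl hfactor, prod_mul_distrib, prod_const, card_range,
    qPochhammer]

end qPochhammer

/-- The Gaussian binomial coefficient `[n, k]`, defined by the q-Pascal recurrence. -/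
noncomputable def gaussianBinomial : ℕ → ℕ → ℤ[X]
  | _, 0 => 1
  | 0, _ + 1 => 0
  | n + 1, k + 1 => gaussianBinomial n k + Polynomial.X ^ (k + 1) * gaussianBinomial n (k + 1)

@[simp]
lemma gaussianBinomial_zero_right (n : ℕ) : gaussianBinomial n 0 = 1 := by
  cases n <;> rfl

lemma gaussianBinomial_succ_succ (n k : ℕ) :
    gaussianBinomial (n + 1) (k + 1) =
      gaussianBinomial n k + Polynomial.X ^ (k + 1) * gaussianBinomial n (k + 1) := rfl

lemma gaussianBinomial_of_lt {n k : ℕ} (h : n < k) : gaussianBinomial n k = 0 := by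
  induction n generalizing k with
  | zero => obtain ⟨k, rfl⟩ := Nat.exists_eq_succ_of_ne_zero h.ne'; rfl
  | succ n ih =>
    obtain ⟨k, rfl⟩ := Nat.exists_eq_succ_of_ne_zero (Nat.ne_zero_of_lt h)
    rw [gaussianBinomial_succ_succ, ih (by omega), ih (by omega), mul_zero, add_zero]

@[simp]
lemma gaussianBinomial_self (n : ℕ) : gaussianBinomial n n = 1 := by
  induction n with
  | zero => rfl
  | succ n ih =>
    rw [gaussianBinomial_succ_succ, ih, gaussianBinomial_of_lt n.lt_succ_self, mul_zero,
      add_zero]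

lemma gaussianBinomial_mul_qPochhammer_mul_qPochhammer {n k : ℕ} (h : k ≤ n) :
    gaussianBinomial n k * qPochhammer Polynomial.X k * qPochhammer Polynomial.X (n - k) =
      qPochhammer Polynomial.X n := by
  induction n generalizing k with
  | zero => simp [show k = 0 by omega]
  | succ n ih =>
    rcases k with _ | k
    · simp
    rcases h.eq_or_lt with heq | hlt
    · obtain rfl : k = n := by omega
      simp
    obtain ⟨a, rfl⟩ : ∃ a, n = k + 1 + a := ⟨n - (k + 1), by omega⟩
    have ih₁ := ih (k := k) (by omega)
    have ih₂ := ih (k := k + 1) (by omega)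
    rw [show k + 1 + a - k = a + 1 by omega, qPochhammer_succ _ a] at ih₁
    rw [show k + 1 + a - (k + 1) = a by omega, qPochhammer_succ _ k] at ih₂
    rw [show k + 1 + a + 1 - (k + 1) = a + 1 by omega, gaussianBinomial_succ_succ,
      qPochhammer_succ _ k, qPochhammer_succ _ a, qPochhammer_succ _ (k + 1 + a)]
    linear_combination (1 - Polynomial.X ^ (k + 1)) * ih₁ +
      Polynomial.X ^ (k + 1) * (1 - Polynomial.X ^ (a + 1)) * ih₂

lemma gaussianBinomial_two_mul_mul_qPochhammer (k : ℕ) :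
    gaussianBinomial (2 * k) k * qPochhammer Polynomial.X k =
      ∏ j ∈ range k, (1 - Polynomial.X ^ (k + j + 1)) := by
  have h2k : qPochhammer (Polynomial.X : ℤ[X]) (2 * k) =
      qPochhammer Polynomial.X k * ∏ j ∈ range k, (1 - Polynomial.X ^ (k + j + 1)) := by
    rw [two_mul, qPochhammer_add]
  have h := gaussianBinomial_mul_qPochhammer_mul_qPochhammer (show k ≤ 2 * k by omega)
  rw [show 2 * k - k = k by omega, h2k] at h
  exact mul_left_cancel₀ (qPochhammer_X_ne_zero k) (by linear_combination h)

theorem cyclotomic_dvd_gaussianBinomial_mul_X_pow_sub (k : ℕ) :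
    cyclotomic (2 * k + 1) ℤ ∣
      gaussianBinomial (2 * k) k * Polynomial.X ^ (∑ i ∈ range (k + 1), i) - (-1) ^ k := by
  obtain ⟨ζ, hζ⟩ : ∃ ζ : ℂ, IsPrimitiveRoot ζ (2 * k + 1) :=
    ⟨_, Complex.isPrimitiveRoot_exp _ (by omega)⟩
  rw [cyclotomic_eq_minpoly hζ (by omega)]
  refine minpoly.isIntegrallyClosed_dvd (hζ.isIntegral (by omega)) ?_
  have hG : aeval ζ (gaussianBinomial (2 * k) k) * qPochhammer ζ k =
      ∏ j ∈ range k, (1 - ζ ^ (k + j + 1)) := by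
    simpa [map_qPochhammer, map_prod] using
      congrArg (aeval ζ) (gaussianBinomial_two_mul_mul_qPochhammer k)
  rw [map_sub, map_mul, map_pow, map_pow, map_neg, map_one, aeval_X, sub_eq_zero]
  refine mul_right_cancel₀ (hζ.qPochhammer_ne_zero (show k < 2 * k + 1 by omega)) ?_
  rw [mul_right_comm, hG]
  exact prod_one_sub_pow_mul_pow_of_pow_eq_one hζ.pow_eq_one

noncomputable def ιRingHom : ℤ[X] →+* RatFunc ℚ :=
  (algebraMap ℚ[X] (RatFunc ℚ)).comp (mapRingHom (Int.castRingHom ℚ))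

lemma coe_ιRingHom : ⇑ιRingHom = ι := rfl

lemma ι_X : ι Polynomial.X = q := by
  simp [ι, q, RatFunc.algebraMap_X]

lemma ι_injective : Function.Injective ι := fun _ _ h =>
  map_injective _ Int.cast_injective (RatFunc.algebraMap_injective ℚ h)

lemma ι_qPochhammer_X (n : ℕ) : ι (qPochhammer Polynomial.X n) = qPochhammer q n := by
  rw [← coe_ιRingHom, map_qPochhammer, coe_ιRingHom, ι_X]

lemma qpoch_q_q (n : ℕ) : qpoch q q n = qPochhammer q n :=
  prod_congr rfl fun j _ => by rw [pow_succ']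

lemma qPochhammer_q_ne_zero (n : ℕ) : qPochhammer q n ≠ 0 := by
  rw [← ι_qPochhammer_X, ← coe_ιRingHom]
  exact (map_ne_zero_iff _ ι_injective).mpr (qPochhammer_X_ne_zero n)

lemma ι_gaussianBinomial {n k : ℕ} (h : k ≤ n) : ι (gaussianBinomial n k) = qbinom n k := by
  rw [qbinom, qpoch_q_q, qpoch_q_q, qpoch_q_q, eq_div_iff
    (mul_ne_zero (qPochhammer_q_ne_zero _) (qPochhammer_q_ne_zero _)), ← mul_assoc,
    ← ι_qPochhammer_X, ← ι_qPochhammer_X, ← ι_qPochhammer_X, ← coe_ιRingHom, ← map_mul,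
    ← map_mul, gaussianBinomial_mul_qPochhammer_mul_qPochhammer h]

/-- Divisibility in `ℤ[q,q⁻¹]` is encoded as: some `q^j`-multiple of the difference is `Φ_m(q)`
times an integer polynomial (the units of `ℤ[q,q⁻¹]` being `± q^j`). -/
theorem qbinom_congruence_general (m : ℕ) (hm : Odd m) :
    ∃ (c : Polynomial ℤ) (j : ℕ),
      (qbinom (m - 1) ((m - 1) / 2) - (-1 : RatFunc ℚ) ^ ((m - 1) / 2) *
          q ^ ((1 - (m : ℤ) ^ 2) / 8)) * q ^ j
        = ι (Polynomial.cyclotomic m ℤ * c) := by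
  obtain ⟨k, rfl⟩ := hm
  obtain ⟨c, hc⟩ := cyclotomic_dvd_gaussianBinomial_mul_X_pow_sub k
  set N := ∑ i ∈ range (k + 1), i
  have hN : ((1 - ((2 * k + 1 : ℕ) : ℤ) ^ 2) / 8) = -(N : ℤ) := by
    have h := sum_range_id_mul_two (k + 1)
    rw [Nat.add_sub_cancel] at h
    have h' : (N : ℤ) * 2 = (k + 1) * k := by exact_mod_cast h
    have h8 : 1 - ((2 * k + 1 : ℕ) : ℤ) ^ 2 = 8 * -(N : ℤ) := by
      push_cast
      linear_combination 4 * h'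
    rw [h8, Int.mul_ediv_cancel_left _ (by norm_num)]
  refine ⟨c, N, ?_⟩
  have hq : q ≠ 0 := RatFunc.X_ne_zero
  rw [show 2 * k + 1 - 1 = 2 * k by omega, show 2 * k / 2 = k by omega, hN, ← hc,
    ← coe_ιRingHom, map_sub, map_mul, map_pow, map_pow, map_neg, map_one, coe_ιRingHom, ι_X,
    ι_gaussianBinomial (by omega), zpow_neg, zpow_natCast]
  field_simp

/-- `Φ_m(q)` divides `qbinom(m-1,(m-1)/2) - (-1)^{(m-1)/2} q^{(1-m²)/8}` in the Laurent
polynomial ring `ℤ[q,q⁻¹]`: since the units of `ℤ[q,q⁻¹]` are `± q^j`, this divisibility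
is expressed by saying that some `q^j`-multiple of the difference is `Φ_m(q)` times a
polynomial with integer coefficients. -/
theorem qbinom_congruence (m : ℕ) (hm : Odd m) (hm1 : 1 < m) :
    ∃ (c : Polynomial ℤ) (j : ℕ),
      (qbinom (m - 1) ((m - 1) / 2) - (-1 : RatFunc ℚ) ^ ((m - 1) / 2) *
          q ^ ((1 - (m : ℤ) ^ 2) / 8)) * q ^ j
        = ι (Polynomial.cyclotomic m ℤ * c) :=
  qbinom_congruence_general m hm
end
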